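/- arXiv:1810.04476 — 8 statements merged into one kernel-verified Lean document; each statement's English description precedes it below -/
import Mathlib

section
/- Let A ⊆ R be commutative rings, with R Noetherian, and let I be a p-primary ideal of R for some prime ideal p. Then the differential power I⟨n⟩_A is also p-primary for every n ≥ 1. -/
/-- The `A`-linear differential operators on `R` of order at most `n`,
defined inductively: `D^0` consists of the `R`-linear endomorphisms (multiplications),
and `δ ∈ D^{n+1}` iff `[δ, r] ∈ D^n` for all `r : R`. -/
def DiffOp (A R : Type*) [CommRing A] [CommRing R] [Algebra A R] : ℕ → Set (R →ₗ[A] R)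
  | 0 => {δ | ∃ s : R, ∀ x : R, δ x = s * x}
  | n + 1 => {δ | ∀ r : R,
      δ ∘ₗ LinearMap.mulLeft A r - LinearMap.mulLeft A r ∘ₗ δ ∈ DiffOp A R n}

/-- The `n`-th `A`-linear differential power of an ideal `I ⊆ R`:
`I⟨n⟩_A = {f ∈ R | δ f ∈ I for all δ ∈ D^{n-1}_{R|A}}`. -/
def diffPower (A : Type*) {R : Type*} [CommRing A] [CommRing R] [Algebra A R]
    (I : Ideal R) (n : ℕ) : Set R :=
  {f : R | ∀ δ ∈ DiffOp A R (n - 1), δ f ∈ I}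

/-!
`I⟨m+1⟩_A` lies between `I ^ (m+1)` and `I`, so it has the same radical as `I`. For primariness,
write `δ (a * b) = ⁅δ, a⁆ b + a * δ b`: if `a ∉ √I` and `a * b ∈ I⟨m+2⟩_A`, then `b ∈ I⟨m+1⟩_A` by
induction, so `⁅δ, a⁆ b ∈ I`, hence `a * δ b ∈ I` and `δ b ∈ I` because `I` is primary.
-/

theorem Ideal.IsPrimary.mem_of_mul_mem_of_notMem_radical {R : Type*} [CommSemiring R]
    {I : Ideal R} (hI : I.IsPrimary) {a b : R} (hab : a * b ∈ I) (ha : a ∉ I.radical) : b ∈ I :=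
  ((Ideal.isPrimary_iff.mp hI).2 (mul_comm a b ▸ hab)).resolve_right ha

namespace DiffOp

variable {A R : Type*} [CommRing A] [CommRing R] [Algebra A R]

theorem mem_succ_iff {n : ℕ} {δ : R →ₗ[A] R} :
    δ ∈ DiffOp A R (n + 1) ↔ ∀ r : R, ⁅δ, LinearMap.mulLeft A r⁆ ∈ DiffOp A R n :=
  Iff.rfl

theorem lie_mulLeft_apply (δ : R →ₗ[A] R) (r f : R) :
    ⁅δ, LinearMap.mulLeft A r⁆ f = δ (r * f) - r * δ f := by
  simp [Ring.lie_def]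

theorem zero_mem : ∀ n, (0 : R →ₗ[A] R) ∈ DiffOp A R n
  | 0 => ⟨0, fun x => by simp⟩
  | n + 1 => mem_succ_iff.mpr fun r => by simpa [Ring.lie_def] using zero_mem n

theorem lie_mulLeft_eq_zero {δ : R →ₗ[A] R} (hδ : δ ∈ DiffOp A R 0) (r : R) :
    ⁅δ, LinearMap.mulLeft A r⁆ = 0 := by
  obtain ⟨s, hs⟩ := hδ
  ext f
  rw [lie_mulLeft_apply, hs, hs, LinearMap.zero_apply]
  ring

theorem monotone : Monotone (DiffOp A R) := by
  refine monotone_nat_of_le_succ fun n => ?_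
  induction n with
  | zero => exact fun δ hδ => mem_succ_iff.mpr fun r => lie_mulLeft_eq_zero hδ r ▸ zero_mem 0
  | succ n ih => exact fun δ hδ => mem_succ_iff.mpr fun r => ih (hδ r)

theorem id_mem (n : ℕ) : (LinearMap.id : R →ₗ[A] R) ∈ DiffOp A R n :=
  monotone n.zero_le ⟨1, fun x => (one_mul x).symm⟩

theorem lie_mulLeft_mem {n : ℕ} {δ : R →ₗ[A] R} (hδ : δ ∈ DiffOp A R n) (r : R) :
    ⁅δ, LinearMap.mulLeft A r⁆ ∈ DiffOp A R n := by
  cases n with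
  | zero => exact lie_mulLeft_eq_zero hδ r ▸ zero_mem 0
  | succ n => exact monotone n.le_succ (hδ r)

end DiffOp

section diffPowerIdeal

variable {A R : Type*} [CommRing A] [CommRing R] [Algebra A R] {I : Ideal R} {m : ℕ}

open DiffOp

variable (A) in
/-- Indexed by the order of the operators: `diffPowerIdeal A I m` is `I⟨m+1⟩_A`. -/
def diffPowerIdeal (I : Ideal R) (m : ℕ) : Ideal R where
  carrier := {f | ∀ δ ∈ DiffOp A R m, δ f ∈ I}
  zero_mem' δ _ := by simpa only [map_zero] using I.zero_mem
  add_mem' ha hb δ hδ := by simpa only [map_add] using I.add_mem (ha δ hδ) (hb δ hδ)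
  smul_mem' r f hf δ hδ := by
    have := I.add_mem (hf _ (lie_mulLeft_mem hδ r)) (I.mul_mem_left r (hf δ hδ))
    rwa [lie_mulLeft_apply, sub_add_cancel] at this

theorem coe_diffPowerIdeal_pred (I : Ideal R) (n : ℕ) :
    (diffPowerIdeal A I (n - 1) : Set R) = diffPower A I n :=
  rfl

theorem diffPowerIdeal_zero (I : Ideal R) : diffPowerIdeal A I 0 = I := by
  ext f
  refine ⟨fun hf => hf _ (id_mem 0), ?_⟩
  rintro hf δ ⟨s, hs⟩
  exact hs f ▸ I.mul_mem_left s hf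

theorem diffPowerIdeal_le (I : Ideal R) (m : ℕ) : diffPowerIdeal A I m ≤ I :=
  fun _ hf => hf _ (id_mem m)

theorem diffPowerIdeal_antitone (I : Ideal R) : Antitone (diffPowerIdeal A I) :=
  fun _ _ hmk _ hf δ hδ => hf δ (DiffOp.monotone hmk hδ)

theorem mul_mem_diffPowerIdeal_succ {r f : R} (hr : r ∈ I) (hf : f ∈ diffPowerIdeal A I m) :
    r * f ∈ diffPowerIdeal A I (m + 1) := by
  intro δ hδ
  have := I.add_mem (hf _ (mem_succ_iff.mp hδ r)) (I.mul_mem_right (δ f) hr)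
  rwa [lie_mulLeft_apply, sub_add_cancel] at this

theorem pow_succ_le_diffPowerIdeal (I : Ideal R) (m : ℕ) : I ^ (m + 1) ≤ diffPowerIdeal A I m := by
  induction m with
  | zero => rw [pow_one, diffPowerIdeal_zero]
  | succ m ih =>
    rw [pow_succ']
    exact Submodule.mul_le.mpr fun r hr f hf => mul_mem_diffPowerIdeal_succ hr (ih hf)

theorem radical_diffPowerIdeal (I : Ideal R) (m : ℕ) :
    (diffPowerIdeal A I m).radical = I.radical :=
  le_antisymm (Ideal.radical_mono (diffPowerIdeal_le I m)) <|
    (Ideal.radical_pow (I := I) m.succ_ne_zero).symm.trans_le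
      (Ideal.radical_mono (pow_succ_le_diffPowerIdeal I m))

theorem mem_diffPowerIdeal_of_mul_mem (hI : I.IsPrimary) {a b : R} (ha : a ∉ I.radical)
    (hab : a * b ∈ diffPowerIdeal A I m) : b ∈ diffPowerIdeal A I m := by
  induction m with
  | zero =>
    rw [diffPowerIdeal_zero] at hab ⊢
    exact hI.mem_of_mul_mem_of_notMem_radical hab ha
  | succ m ih =>
    have hb : b ∈ diffPowerIdeal A I m := ih (diffPowerIdeal_antitone I m.le_succ hab)
    intro δ hδ
    have had : a * δ b ∈ I := by
      have := I.sub_mem (hab δ hδ) (hb _ (mem_succ_iff.mp hδ a))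
      rwa [lie_mulLeft_apply, sub_sub_cancel] at this
    exact hI.mem_of_mul_mem_of_notMem_radical had ha

theorem isPrimary_diffPowerIdeal (hI : I.IsPrimary) (m : ℕ) :
    (diffPowerIdeal A I m).IsPrimary := by
  refine Ideal.isPrimary_iff.mpr ⟨ne_top_of_le_ne_top hI.ne_top (diffPowerIdeal_le I m), ?_⟩
  intro x y hxy
  rw [radical_diffPowerIdeal, or_iff_not_imp_right]
  exact fun hy => mem_diffPowerIdeal_of_mul_mem hI hy (mul_comm x y ▸ hxy)

end diffPowerIdeal

theorem diffPower_isPrimary_general (A R : Type*) [CommRing A] [CommRing R] [Algebra A R]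
    (p I : Ideal R)
    (hI : I.IsPrimary) (hrad : I.radical = p) (n : ℕ) :
    ∃ J : Ideal R, (J : Set R) = diffPower A I n ∧ J.IsPrimary ∧ J.radical = p :=
  ⟨diffPowerIdeal A I (n - 1), coe_diffPowerIdeal_pred I n, isPrimary_diffPowerIdeal hI _,
    (radical_diffPowerIdeal I _).trans hrad⟩

/-- If `R` is Noetherian and `I` is `p`-primary, then the differential power `I⟨n⟩_A`
is an ideal which is again `p`-primary. -/
theorem diffPower_isPrimary (A R : Type*) [CommRing A] [CommRing R] [Algebra A R]
    [IsNoetherianRing R] (p I : Ideal R) (hp : p.IsPrime)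
    (hI : I.IsPrimary) (hrad : I.radical = p) (n : ℕ) (hn : 1 ≤ n) :
    ∃ J : Ideal R, (J : Set R) = diffPower A I n ∧ J.IsPrimary ∧ J.radical = p :=
  diffPower_isPrimary_general A R p I hI hrad n
end

section
/- Let A ⊆ R be commutative rings and J an ideal of R. Then the differential core P_A(J) = ⋂_{n≥1} J⟨n⟩_A is a D_{R|A}-ideal, i.e., δ(P_A(J)) ⊆ P_A(J) for every A-linear differential operator δ on R. -/
/-! The differential operators of order at most `k + m` contain the composites of operators of
orders `k` and `m`: the commutator `[ε ∘ δ, r] = [ε, r] ∘ δ + ε ∘ [δ, r]` lowers the total order by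
one, so a double induction on the orders goes through. Consequently an operator of order `m`
maps `J⟨n + m⟩` into `J⟨n⟩`, and the intersection of all `J⟨n⟩` is stable. -/

open LinearMap

section DiffOp

variable {A R : Type*} [CommRing A] [CommRing R] [Algebra A R]

theorem mem_diffOp_zero_iff {δ : R →ₗ[A] R} : δ ∈ DiffOp A R 0 ↔ ∃ s : R, δ = mulLeft A s := by
  simp only [DiffOp, Set.mem_ofPred_eq, LinearMap.ext_iff, mulLeft_apply]

theorem add_mem_diffOp {n : ℕ} {δ ε : R →ₗ[A] R} (hδ : δ ∈ DiffOp A R n)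
    (hε : ε ∈ DiffOp A R n) : δ + ε ∈ DiffOp A R n := by
  induction n generalizing δ ε with
  | zero =>
    obtain ⟨s, rfl⟩ := mem_diffOp_zero_iff.mp hδ
    obtain ⟨t, rfl⟩ := mem_diffOp_zero_iff.mp hε
    exact mem_diffOp_zero_iff.mpr ⟨s + t, by ext; simp [add_mul]⟩
  | succ n ih =>
    intro r
    rw [add_comp, comp_add, add_sub_add_comm]
    exact ih (hδ r) (hε r)

theorem comp_mulLeft_mem_diffOp {k : ℕ} {ε : R →ₗ[A] R} (hε : ε ∈ DiffOp A R k) (s : R) :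
    ε ∘ₗ mulLeft A s ∈ DiffOp A R k := by
  induction k generalizing ε with
  | zero =>
    obtain ⟨t, rfl⟩ := mem_diffOp_zero_iff.mp hε
    exact mem_diffOp_zero_iff.mpr ⟨t * s, by ext; simp⟩
  | succ k ih =>
    intro r
    convert ih (hε r) using 1
    ext x
    simp [mul_left_comm]

theorem mulLeft_comp_mem_diffOp {k : ℕ} {ε : R →ₗ[A] R} (hε : ε ∈ DiffOp A R k) (s : R) :
    mulLeft A s ∘ₗ ε ∈ DiffOp A R k := by
  induction k generalizing ε with
  | zero =>
    obtain ⟨t, rfl⟩ := mem_diffOp_zero_iff.mp hε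
    exact mem_diffOp_zero_iff.mpr ⟨s * t, by ext; simp⟩
  | succ k ih =>
    intro r
    convert ih (hε r) using 1
    ext x
    simp [mul_sub, mul_left_comm]

theorem comp_sub_mulLeft_comp (ε δ : R →ₗ[A] R) (r : R) :
    (ε ∘ₗ δ) ∘ₗ mulLeft A r - mulLeft A r ∘ₗ (ε ∘ₗ δ) =
      (ε ∘ₗ mulLeft A r - mulLeft A r ∘ₗ ε) ∘ₗ δ + ε ∘ₗ (δ ∘ₗ mulLeft A r - mulLeft A r ∘ₗ δ) := by
  simp only [comp_sub, sub_comp, comp_assoc]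
  abel

theorem comp_mem_diffOp {k m : ℕ} {ε δ : R →ₗ[A] R} (hε : ε ∈ DiffOp A R k)
    (hδ : δ ∈ DiffOp A R m) : ε ∘ₗ δ ∈ DiffOp A R (k + m) := by
  induction m generalizing k ε δ with
  | zero =>
    obtain ⟨s, rfl⟩ := mem_diffOp_zero_iff.mp hδ
    exact comp_mulLeft_mem_diffOp hε s
  | succ m ihm =>
    induction k generalizing ε with
    | zero =>
      obtain ⟨t, rfl⟩ := mem_diffOp_zero_iff.mp hε
      simpa using mulLeft_comp_mem_diffOp hδ t
    | succ k ihk =>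
      intro r
      show _ ∈ DiffOp A R (k + 1 + m)
      rw [comp_sub_mulLeft_comp]
      refine add_mem_diffOp ?_ ?_
      · rw [Nat.add_right_comm]
        exact ihk (hε r)
      · exact ihm hε (hδ r)

theorem apply_mem_diffPower {I : Ideal R} {m n : ℕ} (hn : 1 ≤ n) {δ : R →ₗ[A] R}
    (hδ : δ ∈ DiffOp A R m) {f : R} (hf : f ∈ diffPower A I (n + m)) : δ f ∈ diffPower A I n := by
  intro ε hε
  have hεδ : ε ∘ₗ δ ∈ DiffOp A R (n + m - 1) := by
    rw [Nat.sub_add_comm hn]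
    exact comp_mem_diffOp hε hδ
  exact hf _ hεδ

end DiffOp

/-- The differential core `P_A(J) = ⋂_{n ≥ 1} J⟨n⟩_A` is a `D_{R|A}`-ideal:
it is stable under every `A`-linear differential operator on `R`. -/
theorem diffCore_isDIdeal (A R : Type*) [CommRing A] [CommRing R] [Algebra A R]
    (J : Ideal R) :
    ∀ m : ℕ, ∀ δ ∈ DiffOp A R m, ∀ f ∈ ⋂ n ∈ Set.Ici 1, diffPower A J n,
      δ f ∈ ⋂ n ∈ Set.Ici 1, diffPower A J n := by
  intro m δ hδ f hf
  simp only [Set.mem_iInter₂, Set.mem_Ici] at hf ⊢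
  exact fun n hn => apply_mem_diffPower hn hδ (hf (n + m) (by omega))
end

section
/- Let R be a commutative ring, A ⊆ R a subring, I ⊆ J ideals of R, R' = R/I, A' = A/(A ∩ I), and J' the image of J in R'. If I is a D_{R|A}-ideal and J' is a D_{R'|A'}-ideal, then J is a D_{R|A}-ideal. -/
/-!
An operator `δ` preserving `I` induces `δ'` on `R ⧸ I` with `π ∘ δ = δ' ∘ π`. Since `π` is
surjective, the commutator `[δ', π r]` is induced by `[δ, r]`, so by induction on the order `δ'`
is again a differential operator, and `π (δ f) = δ' (π f)` lies in `J'`; as `I ⊆ J`, `δ f ∈ J`.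
-/

theorem DiffOp.mem_of_semiconj {A R S : Type*} [CommRing A] [CommRing R] [CommRing S]
    [Algebra A R] [Algebra A S] {π : R →+* S} (hπ : Function.Surjective π) {n : ℕ} :
    ∀ {δ : R →ₗ[A] R} {δ' : S →ₗ[A] S}, Function.Semiconj π δ δ' → δ ∈ DiffOp A R n →
      δ' ∈ DiffOp A S n := by
  induction n with
  | zero =>
    rintro δ δ' h ⟨s, hs⟩
    refine ⟨π s, hπ.forall.2 fun x => ?_⟩
    rw [← h x, hs, map_mul]
  | succ n ih =>
    intro δ δ' h hδ
    refine hπ.forall.2 fun r => ih (fun x => ?_) (hδ r)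
    simp [h.eq]

theorem Ideal.exists_semiconj_quotientMk {A R : Type*} [CommRing A] [CommRing R] [Algebra A R]
    {I : Ideal R} {δ : R →ₗ[A] R} (h : ∀ x ∈ I, δ x ∈ I) :
    ∃ δ' : (R ⧸ I) →ₗ[A] (R ⧸ I), Function.Semiconj (Ideal.Quotient.mk I) δ δ' :=
  ⟨Submodule.mapQ (I.restrictScalars A) (I.restrictScalars A) δ h, fun _ => rfl⟩

/-- If `I ⊆ J` are ideals of `R`, `I` is a `D_{R|A}`-ideal, and the image `J'` of `J`
in `R' = R/I` is a `D_{R'|A'}`-ideal (scalars act through the image `A'` of `A`,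
so `A'`-linearity coincides with `A`-linearity), then `J` is a `D_{R|A}`-ideal. -/
theorem dIdeal_of_quotient (A R : Type*) [CommRing A] [CommRing R] [Algebra A R]
    (I J : Ideal R) (hIJ : I ≤ J)
    (hI : ∀ m : ℕ, ∀ δ ∈ DiffOp A R m, ∀ f ∈ I, δ f ∈ I)
    (hJ' : ∀ m : ℕ, ∀ δ ∈ DiffOp A (R ⧸ I) m, ∀ f ∈ J.map (Ideal.Quotient.mk I),
        δ f ∈ J.map (Ideal.Quotient.mk I)) :
    ∀ m : ℕ, ∀ δ ∈ DiffOp A R m, ∀ f ∈ J, δ f ∈ J := by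
  intro m δ hδ f hf
  obtain ⟨δ', hδ'⟩ := Ideal.exists_semiconj_quotientMk (hI m δ hδ)
  have hδ'f := hJ' m δ' (DiffOp.mem_of_semiconj Ideal.Quotient.mk_surjective hδ' hδ) _
    (Ideal.mem_map_of_mem _ hf)
  rw [← hδ' f] at hδ'f
  exact (Ideal.mem_quotient_iff_mem hIJ).mp hδ'f
end

section
/- Let (R,m,k) be a commutative Noetherian local ring and M a finitely generated R-module. Consider the exact sequence 0 → Hom_R(M,m) → Hom_R(M,R) → Q → 0 where the first map is induced by the inclusion m ⊆ R. Then the free rank of M (the maximal rank of a free direct summand of M) equals the dimension of Q as a k-vector space. -/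
/-- The free rank of an `R`-module `M`: the largest `s` such that `M` admits a
direct sum decomposition `M ≅ R^s ⊕ N`. -/
noncomputable def freeRank (R M : Type*) [CommRing R] [AddCommGroup M] [Module R M] : ℕ :=
  sSup {s : ℕ | ∃ F N : Submodule R M, IsCompl F N ∧ Nonempty (F ≃ₗ[R] (Fin s → R))}

/-- The submodule of `Hom_R(M, R)` consisting of functionals with values in the
ideal `I`, i.e. the image of `Hom_R(M, I) → Hom_R(M, R)`. -/
def homIntoIdeal (R M : Type*) [CommRing R] [AddCommGroup M] [Module R M] (I : Ideal R) :
    Submodule R (M →ₗ[R] R) where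
  carrier := {φ | ∀ x : M, φ x ∈ I}
  add_mem' := fun {a b} ha hb x => by simp only [LinearMap.add_apply]; exact I.add_mem (ha x) (hb x)
  zero_mem' := fun x => by simp only [LinearMap.zero_apply]; exact I.zero_mem
  smul_mem' := fun r φ h x => by simpa using I.mul_mem_left r (h x)

/-! A free summand of rank `s` is the same as a surjection `f : M → Rˢ`, free modules being
projective. Take `s` maximal, and lifts `e i` of the standard basis vectors. Evaluating at the
`e i` modulo `m` maps `Hom(M, R)` onto `kˢ`, and its kernel consists of the functionals with
values in `m`: such a `φ` is in `m` on the span of the `e i`, and a unit value `φ y` with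
`f y = 0` would make `(φ, f) : M → R^(s+1)` surjective, contradicting the maximality of `s`. -/

open Function IsLocalRing

theorem exists_isCompl_equiv_iff_exists_surjective {R M P : Type*} [Ring R] [AddCommGroup M]
    [Module R M] [AddCommGroup P] [Module R P] [Module.Projective R P] :
    (∃ F N : Submodule R M, IsCompl F N ∧ Nonempty (F ≃ₗ[R] P)) ↔
      ∃ f : M →ₗ[R] P, Surjective f := by
  constructor
  · rintro ⟨F, N, hFN, ⟨ε⟩⟩
    exact ⟨ε.toLinearMap ∘ₗ F.projectionOnto N hFN,
      ε.surjective.comp (F.projectionOnto_surjective hFN)⟩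
  · rintro ⟨f, hf⟩
    obtain ⟨g, hfg⟩ := f.exists_rightInverse_of_surjective (LinearMap.range_eq_top.2 hf)
    have hfg' : LeftInverse f g := LinearMap.ext_iff.1 hfg
    have hproj : ∀ x : LinearMap.range g, (g.rangeRestrict ∘ₗ f) x = x := by
      rintro ⟨_, v, rfl⟩
      ext
      simp [hfg' v]
    have hker : LinearMap.ker (g.rangeRestrict ∘ₗ f) = LinearMap.ker f := by
      rw [LinearMap.ker_comp, LinearMap.ker_rangeRestrict, LinearMap.ker_eq_bot.2 hfg'.injective,
        Submodule.comap_bot]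
    exact ⟨LinearMap.range g, LinearMap.ker f, hker ▸ LinearMap.isCompl_of_proj hproj,
      ⟨(LinearEquiv.ofInjective g hfg'.injective).symm⟩⟩

theorem LinearMap.prod_surjective_of_isUnit {R M P : Type*} [Ring R] [AddCommGroup M]
    [Module R M] [AddCommGroup P] [Module R P] (φ : M →ₗ[R] R) {f : M →ₗ[R] P}
    (hf : Surjective f) {y : M} (hy : f y = 0) (hu : IsUnit (φ y)) : Surjective (φ.prod f) := by
  rintro ⟨r, p⟩
  obtain ⟨x, rfl⟩ := hf p
  refine ⟨x + ((r - φ x) * ↑hu.unit⁻¹) • y, ?_⟩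
  simp [hy, mul_assoc]

section FreeRank

variable (R M : Type*) [CommRing R] [AddCommGroup M] [Module R M]

theorem freeRank_eq_sSup_surjective :
    freeRank R M = sSup {s | ∃ f : M →ₗ[R] (Fin s → R), Surjective f} := by
  simp only [freeRank, exists_isCompl_equiv_iff_exists_surjective]

variable [Nontrivial R] [Module.Finite R M]

theorem bddAbove_setOf_surjective_fin :
    BddAbove {s | ∃ f : M →ₗ[R] (Fin s → R), Surjective f} := by
  obtain ⟨k, π, hπ⟩ := Module.Finite.exists_fin' R M
  exact ⟨k, fun s ⟨f, hf⟩ => le_of_fin_surjective R (f ∘ₗ π) (hf.comp hπ)⟩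

theorem exists_surjective_freeRank :
    ∃ f : M →ₗ[R] (Fin (freeRank R M) → R), Surjective f := by
  have := Nat.sSup_mem (s := {s | ∃ f : M →ₗ[R] (Fin s → R), Surjective f})
    ⟨0, 0, surjective_to_subsingleton _⟩ (bddAbove_setOf_surjective_fin R M)
  rwa [← freeRank_eq_sSup_surjective] at this

variable {R M} in
theorem le_freeRank_of_surjective {s : ℕ} {f : M →ₗ[R] (Fin s → R)} (hf : Surjective f) :
    s ≤ freeRank R M := by
  rw [freeRank_eq_sSup_surjective]
  exact le_csSup (bddAbove_setOf_surjective_fin R M) ⟨f, hf⟩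

end FreeRank

theorem apply_mem_maximalIdeal_of_apply_eq_zero {R M : Type*} [CommRing R] [IsLocalRing R]
    [AddCommGroup M] [Module R M] [Module.Finite R M] {f : M →ₗ[R] (Fin (freeRank R M) → R)}
    (hf : Surjective f) (φ : M →ₗ[R] R) {y : M} (hy : f y = 0) : φ y ∈ maximalIdeal R := by
  by_contra hφy
  have hsurj : Surjective (φ.vecCons f) := (Fin.consLinearEquiv R _).surjective.comp
    (φ.prod_surjective_of_isUnit hf hy (notMem_maximalIdeal.1 hφy))
  exact (le_freeRank_of_surjective hsurj).not_gt (Nat.lt_succ_self _)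

section EvalModIdeal

variable {R M ι : Type*} [CommRing R] [AddCommGroup M] [Module R M]

def evalModIdeal (I : Ideal R) (e : ι → M) : (M →ₗ[R] R) →ₗ[R] (ι → R ⧸ I) :=
  LinearMap.pi fun i => I.mkQ ∘ₗ LinearMap.applyₗ (e i)

variable [Fintype ι] [DecidableEq ι] {f : M →ₗ[R] (ι → R)} {e : ι → M}

theorem comp_linearCombination_eq_id (hfe : ∀ i, f (e i) = Pi.single i 1) :
    f ∘ₗ Fintype.linearCombination R e = LinearMap.id :=
  LinearMap.pi_ext fun i r => by simp [hfe, ← Pi.single_smul']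

theorem evalModIdeal_surjective (I : Ideal R) (hfe : ∀ i, f (e i) = Pi.single i 1) :
    Surjective (evalModIdeal I e) := by
  intro v
  choose r hr using fun i => I.mkQ_surjective (v i)
  refine ⟨Fintype.linearCombination R r ∘ₗ f, funext fun i => ?_⟩
  simp [evalModIdeal, hfe, hr]

theorem mem_homIntoIdeal_of_mem_ker {I : Ideal R} (hfe : ∀ i, f (e i) = Pi.single i 1)
    {φ : M →ₗ[R] R} (he : ∀ i, φ (e i) ∈ I) (hker : ∀ y, f y = 0 → φ y ∈ I) :
    φ ∈ homIntoIdeal R M I := by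
  intro x
  set x₀ := Fintype.linearCombination R e (f x)
  have hx₀ : φ x₀ ∈ I := by
    simpa [x₀, Fintype.linearCombination_apply] using
      I.sum_mem fun i _ => I.mul_mem_left (f x i) (he i)
  have hx₁ : f (x - x₀) = 0 := by
    rw [map_sub, sub_eq_zero]
    exact (LinearMap.congr_fun (comp_linearCombination_eq_id hfe) (f x)).symm
  simpa using I.add_mem hx₀ (hker _ hx₁)

theorem ker_evalModIdeal_maximalIdeal [IsLocalRing R] [Module.Finite R M]
    {f : M →ₗ[R] (Fin (freeRank R M) → R)} (hf : Surjective f) {e : Fin (freeRank R M) → M}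
    (hfe : ∀ i, f (e i) = Pi.single i 1) :
    LinearMap.ker (evalModIdeal (maximalIdeal R) e) = homIntoIdeal R M (maximalIdeal R) := by
  ext φ
  simp only [LinearMap.mem_ker, evalModIdeal, funext_iff, LinearMap.pi_apply, LinearMap.comp_apply,
    Submodule.mkQ_apply, Submodule.Quotient.mk_eq_zero, LinearMap.applyₗ_apply_apply,
    Pi.zero_apply]
  exact ⟨fun he => mem_homIntoIdeal_of_mem_ker hfe he
    fun y hy => apply_mem_maximalIdeal_of_apply_eq_zero hf φ hy, fun hφ i => hφ (e i)⟩

end EvalModIdeal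

theorem freeRank_eq_dim_coker_general (R M : Type*) [CommRing R] [IsLocalRing R]
    [AddCommGroup M] [Module R M] [Module.Finite R M] :
    Nonempty (((M →ₗ[R] R) ⧸ homIntoIdeal R M (IsLocalRing.maximalIdeal R)) ≃ₗ[R]
      (Fin (freeRank R M) → R ⧸ IsLocalRing.maximalIdeal R)) := by
  obtain ⟨f, hf⟩ := exists_surjective_freeRank R M
  choose e hfe using fun i => hf (Pi.single i 1)
  have hker := ker_evalModIdeal_maximalIdeal hf hfe
  have hsurj := evalModIdeal_surjective (maximalIdeal R) hfe
  exact ⟨(Submodule.quotEquivOfEq _ _ hker.symm).trans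
    ((evalModIdeal (maximalIdeal R) e).quotKerEquivOfSurjective hsurj)⟩

/-- For a finitely generated module `M` over a Noetherian local ring `(R, m, k)`,
the cokernel `Q` of `Hom_R(M, m) → Hom_R(M, R)` is a `k`-vector space of dimension
equal to the free rank of `M`, i.e. `Q ≅ k^{freerank M}`. -/
theorem freeRank_eq_dim_coker (R M : Type*) [CommRing R] [IsLocalRing R]
    [IsNoetherianRing R] [AddCommGroup M] [Module R M] [Module.Finite R M] :
    Nonempty (((M →ₗ[R] R) ⧸ homIntoIdeal R M (IsLocalRing.maximalIdeal R)) ≃ₗ[R]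
      (Fin (freeRank R M) → R ⧸ IsLocalRing.maximalIdeal R)) :=
  freeRank_eq_dim_coker_general R M
end

section
/- Let (R,m,k) be a commutative Noetherian local ring and M a finitely generated R-module. Define N(M) = {x ∈ M | φ(x) ∈ m for all φ ∈ Hom_R(M,R)}. Then the free rank of M equals the length of M/N(M) as an R-module, and equals dim_k(M/N(M)). -/
open IsLocalRing

/-- The length of an `R`-module `M`: the supremum of lengths of strictly increasing
chains of submodules of `M` (i.e. the Krull dimension of the lattice of submodules). -/
noncomputable def moduleLength (R M : Type*) [CommRing R] [AddCommGroup M] [Module R M] :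
    WithBot ℕ∞ :=
  Order.krullDim (Submodule R M)

/-- The submodule `N(M) = {x ∈ M | φ x ∈ m for all φ ∈ Hom_R(M, R)}`. -/
def nonFreeLocus (R M : Type*) [CommRing R] [IsLocalRing R] [AddCommGroup M] [Module R M] :
    Submodule R M where
  carrier := {x | ∀ φ : M →ₗ[R] R, φ x ∈ maximalIdeal R}
  add_mem' := fun {a b} ha hb φ => by
    simp only [map_add]; exact (maximalIdeal R).add_mem (ha φ) (hb φ)
  zero_mem' := fun φ => by simp only [map_zero]; exact (maximalIdeal R).zero_mem
  smul_mem' := fun r x h φ => by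
    simp only [map_smul, smul_eq_mul]; exact (maximalIdeal R).mul_mem_left r (h φ)

/-!
Choose a split injection `g : R^s → M` with retraction `p` and `s` maximal. If a functional `φ`
took a unit value on `ker p`, rescaling would give `u ∈ ker p` with `φ u = 1`, and `(g, p)` would
extend to a split injection `R^(s+1) → M`. So every functional maps `ker p` into `m`, whence
`N(M) = p⁻¹(m^s)` and `p` induces `M/N(M) ≃ k^s`, a module of length `s`.
-/

section SplitSummand

variable {R M P : Type*} [Ring R] [AddCommGroup M] [Module R M] [AddCommGroup P] [Module R P]

theorem exists_isCompl_equiv_iff_exists_leftInverse :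
    (∃ F N : Submodule R M, IsCompl F N ∧ Nonempty (F ≃ₗ[R] P)) ↔
      ∃ (g : P →ₗ[R] M) (p : M →ₗ[R] P), Function.LeftInverse p g := by
  constructor
  · rintro ⟨F, N, hFN, ⟨e⟩⟩
    refine ⟨F.subtype ∘ₗ e.symm.toLinearMap, e.toLinearMap ∘ₗ F.projectionOnto N hFN, fun x => ?_⟩
    simp [Submodule.projectionOnto_apply_left]
  · rintro ⟨g, p, hpg⟩
    have hidem : IsIdempotentElem (g ∘ₗ p) := LinearMap.ext fun x => congrArg g (hpg (p x))
    have hcompl := LinearMap.IsIdempotentElem.isCompl hidem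
    rw [LinearMap.range_comp_of_range_eq_top _ (LinearMap.range_eq_top.mpr hpg.surjective),
      LinearMap.ker_comp_of_ker_eq_bot _ (LinearMap.ker_eq_bot.mpr hpg.injective)] at hcompl
    exact ⟨_, _, hcompl, ⟨(LinearEquiv.ofLeftInverse hpg).symm⟩⟩

theorem exists_leftInverse_prod_of_mem_ker {g : P →ₗ[R] M} {p : M →ₗ[R] P}
    (hpg : Function.LeftInverse p g) {u : M} (hu : p u = 0) {φ : M →ₗ[R] R} (hφ : φ u = 1) :
    ∃ (g' : R × P →ₗ[R] M) (p' : M →ₗ[R] R × P), Function.LeftInverse p' g' := by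
  refine ⟨(LinearMap.toSpanSingleton R M u).coprod g,
    (φ ∘ₗ (LinearMap.id - g ∘ₗ p)).prod p, ?_⟩
  rintro ⟨r, v⟩
  simp [hu, hφ, hpg v]

end SplitSummand

section FreeRank

variable (R M : Type*) [CommRing R] [AddCommGroup M] [Module R M]

def freeSummandRanks : Set ℕ :=
  {s | ∃ (g : (Fin s → R) →ₗ[R] M) (p : M →ₗ[R] (Fin s → R)), Function.LeftInverse p g}

theorem freeRank_eq_sSup_freeSummandRanks : freeRank R M = sSup (freeSummandRanks R M) := by
  simp_rw [freeSummandRanks, ← exists_isCompl_equiv_iff_exists_leftInverse]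
  rfl

variable [StrongRankCondition R] [Module.Finite R M]

theorem bddAbove_freeSummandRanks : BddAbove (freeSummandRanks R M) := by
  obtain ⟨n, f, hf⟩ := Module.Finite.exists_fin' R M
  exact ⟨n, fun s ⟨g, p, hpg⟩ => le_of_fin_surjective R (p ∘ₗ f) (hpg.surjective.comp hf)⟩

theorem freeRank_mem_freeSummandRanks : freeRank R M ∈ freeSummandRanks R M := by
  rw [freeRank_eq_sSup_freeSummandRanks]
  exact Nat.sSup_mem ⟨0, 0, 0, fun _ => Subsingleton.elim _ _⟩ (bddAbove_freeSummandRanks R M)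

variable {R M} in
theorem le_freeRank {n : ℕ} (g : (Fin n → R) →ₗ[R] M) (p : M →ₗ[R] (Fin n → R))
    (hpg : Function.LeftInverse p g) : n ≤ freeRank R M :=
  freeRank_eq_sSup_freeSummandRanks R M ▸ le_csSup (bddAbove_freeSummandRanks R M) ⟨g, p, hpg⟩

end FreeRank

theorem LinearMap.apply_mem_of_forall_mem {R ι : Type*} [CommRing R] [Fintype ι] {I : Ideal R}
    (ψ : (ι → R) →ₗ[R] R) {v : ι → R} (hv : ∀ i, v i ∈ I) : ψ v ∈ I := by
  classical
  rw [LinearMap.pi_apply_eq_sum_univ]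
  exact I.sum_mem fun i _ => I.mul_mem_right _ (hv i)

theorem Module.length_pi_quotient_of_isMaximal {R ι : Type*} [CommRing R] (I : Ideal R)
    [I.IsMaximal] : Module.length R (ι → R ⧸ I) = ENat.card ι := by
  have : IsSimpleModule R (R ⧸ I) := isSimpleModule_iff_isCoatom.mpr (Ideal.isMaximal_def.mp ‹_›)
  simp

section LocalRing

variable {R M : Type*} [CommRing R] [IsLocalRing R] [AddCommGroup M] [Module R M]
  [Module.Finite R M]

theorem apply_mem_maximalIdeal_of_mem_ker {g : (Fin (freeRank R M) → R) →ₗ[R] M}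
    {p : M →ₗ[R] (Fin (freeRank R M) → R)} (hpg : Function.LeftInverse p g) {x : M}
    (hx : p x = 0) (φ : M →ₗ[R] R) : φ x ∈ maximalIdeal R := by
  by_contra hφx
  obtain ⟨a, ha⟩ : IsUnit (φ x) := by simpa [mem_maximalIdeal, mem_nonunits_iff] using hφx
  obtain ⟨g', p', hpg'⟩ := exists_leftInverse_prod_of_mem_ker hpg (u := (↑a⁻¹ : R) • x)
    (by simp [hx]) (φ := φ) (by simp [← ha])
  let e := Fin.consLinearEquiv R (fun _ : Fin (freeRank R M + 1) => R)
  have : freeRank R M + 1 ≤ freeRank R M :=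
    le_freeRank (g' ∘ₗ e.symm.toLinearMap) (e.toLinearMap ∘ₗ p') fun v => by simp [hpg' (e.symm v)]
  omega

theorem mem_nonFreeLocus_iff {g : (Fin (freeRank R M) → R) →ₗ[R] M}
    {p : M →ₗ[R] (Fin (freeRank R M) → R)} (hpg : Function.LeftInverse p g) {x : M} :
    x ∈ nonFreeLocus R M ↔ ∀ i, p x i ∈ maximalIdeal R := by
  refine ⟨fun hx i => hx (LinearMap.proj i ∘ₗ p), fun hx φ => ?_⟩
  have hker : p (x - g (p x)) = 0 := by rw [map_sub, hpg (p x), sub_self]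
  rw [← sub_add_cancel x (g (p x)), map_add]
  exact add_mem (apply_mem_maximalIdeal_of_mem_ker hpg hker φ)
    ((φ ∘ₗ g).apply_mem_of_forall_mem hx)

theorem nonempty_quotient_nonFreeLocus_equiv :
    Nonempty ((M ⧸ nonFreeLocus R M) ≃ₗ[R] (Fin (freeRank R M) → R ⧸ maximalIdeal R)) := by
  obtain ⟨g, p, hpg⟩ := freeRank_mem_freeSummandRanks R M
  let q := LinearMap.compLeft (maximalIdeal R).mkQ (Fin (freeRank R M)) ∘ₗ p
  have hker : LinearMap.ker q = nonFreeLocus R M := by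
    ext x
    rw [LinearMap.mem_ker, mem_nonFreeLocus_iff hpg, funext_iff]
    simp [q, Ideal.Quotient.eq_zero_iff_mem]
  have hq : Function.Surjective q :=
    (Function.Surjective.comp_left (maximalIdeal R).mkQ_surjective).comp hpg.surjective
  exact ⟨(Submodule.quotEquivOfEq _ _ hker.symm).trans (q.quotKerEquivOfSurjective hq)⟩

end LocalRing

theorem freeRank_eq_length_quotient_general (R M : Type*) [CommRing R] [IsLocalRing R]
    [AddCommGroup M] [Module R M] [Module.Finite R M] :
    moduleLength R (M ⧸ nonFreeLocus R M) = (freeRank R M : ℕ∞) ∧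
      Nonempty ((M ⧸ nonFreeLocus R M) ≃ₗ[R]
        (Fin (freeRank R M) → R ⧸ maximalIdeal R)) := by
  obtain ⟨e⟩ := nonempty_quotient_nonFreeLocus_equiv (R := R) (M := M)
  refine ⟨?_, ⟨e⟩⟩
  rw [moduleLength, ← Module.coe_length, e.length_eq, Module.length_pi_quotient_of_isMaximal]
  simp

/-- For a finitely generated module `M` over a Noetherian local ring `(R, m, k)`,
the free rank of `M` equals the length of `M/N(M)` as an `R`-module, and equals
`dim_k (M/N(M))`, i.e. `M/N(M) ≅ k^{freerank M}`. -/
theorem freeRank_eq_length_quotient (R M : Type*) [CommRing R] [IsLocalRing R]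
    [IsNoetherianRing R] [AddCommGroup M] [Module R M] [Module.Finite R M] :
    moduleLength R (M ⧸ nonFreeLocus R M) = (freeRank R M : ℕ∞) ∧
      Nonempty ((M ⧸ nonFreeLocus R M) ≃ₗ[R]
        (Fin (freeRank R M) → R ⧸ maximalIdeal R)) :=
  freeRank_eq_length_quotient_general R M
end

section
/- Let (R,m,K) be an F-finite F-pure local ring of prime characteristic p and let q = p^e. Then m^{F⟨q⟩} = I_e, where I_e = {r ∈ R | φ(r) ∈ m for every φ ∈ Hom_R(F^e_* R, R)}. -/
/-! If `φ` is `p^{-e}`-linear then `(φ ·) ^ p ^ e` is `R^{p^e}`-linear, and `φ f` is a unit exactly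
when `(φ f) ^ p ^ e` is; this gives `m^{F⟨q⟩} ⊆ I_e`. Conversely, if `δ` is `R^{p^e}`-linear with
`δ f = u` a unit, then composing `u⁻¹ • δ` with an F-splitting `π` of order `e` gives a
`p^{-e}`-linear map sending `f` to `π 1 = 1`. -/

open IsLocalRing

theorem exists_iterate_splitting {R : Type*} [CommRing R] {p : ℕ} {φ : R →+ R}
    (hφ : ∀ a x : R, φ (a ^ p * x) = a * φ x) (hφ1 : φ 1 = 1) (e : ℕ) :
    ∃ π : R →+ R, (∀ a x : R, π (a ^ p ^ e * x) = a * π x) ∧ π 1 = 1 := by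
  induction e with
  | zero => exact ⟨AddMonoidHom.id R, by simp, rfl⟩
  | succ e ih =>
    obtain ⟨π, hπ, hπ1⟩ := ih
    refine ⟨π.comp φ, fun a x => ?_, by simp [hφ1, hπ1]⟩
    simp only [AddMonoidHom.comp_apply, pow_succ, pow_mul, hφ, hπ]

theorem iterateFrobenius_comp_map_pow_mul {R : Type*} [CommRing R] {p : ℕ} [ExpChar R p]
    {e : ℕ} {φ : R →+ R} (hφ : ∀ a x : R, φ (a ^ p ^ e * x) = a * φ x) (a x : R) :
    (iterateFrobenius R p e).toAddMonoidHom.comp φ (a ^ p ^ e * x) =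
      a ^ p ^ e * (iterateFrobenius R p e).toAddMonoidHom.comp φ x := by
  simp [iterateFrobenius_def, hφ, mul_pow]

theorem comp_mulLeft_comp_map_pow_mul {R : Type*} [CommRing R] {q : ℕ} {π δ : R →+ R}
    (hπ : ∀ a x : R, π (a ^ q * x) = a * π x) (hδ : ∀ a x : R, δ (a ^ q * x) = a ^ q * δ x)
    (c a x : R) :
    π.comp ((AddMonoidHom.mulLeft c).comp δ) (a ^ q * x) =
      a * π.comp ((AddMonoidHom.mulLeft c).comp δ) x := by
  simp only [AddMonoidHom.comp_apply, AddMonoidHom.coe_mulLeft, hδ, mul_left_comm c, hπ]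

section LocalRing

variable {R : Type*} [CommRing R] [IsLocalRing R]

theorem map_mem_maximalIdeal_of_forall_powLinear {p e : ℕ} [ExpChar R p] {f : R}
    (hf : ∀ δ : R →+ R, (∀ a x : R, δ (a ^ p ^ e * x) = a ^ p ^ e * δ x) →
      δ f ∈ maximalIdeal R)
    {φ : R →+ R} (hφ : ∀ a x : R, φ (a ^ p ^ e * x) = a * φ x) : φ f ∈ maximalIdeal R :=
  (maximalIdeal.isMaximal R).isPrime.mem_of_pow_mem (p ^ e)
    (hf _ (iterateFrobenius_comp_map_pow_mul hφ))

theorem map_mem_maximalIdeal_of_forall_invPowLinear {q : ℕ} {π : R →+ R}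
    (hπ : ∀ a x : R, π (a ^ q * x) = a * π x) (hπ1 : π 1 = 1) {f : R}
    (hf : ∀ φ : R →+ R, (∀ a x : R, φ (a ^ q * x) = a * φ x) → φ f ∈ maximalIdeal R)
    {δ : R →+ R} (hδ : ∀ a x : R, δ (a ^ q * x) = a ^ q * δ x) : δ f ∈ maximalIdeal R := by
  by_contra hδf
  obtain ⟨u, hu⟩ := notMem_maximalIdeal.mp hδf
  have hφf := hf _ (comp_mulLeft_comp_map_pow_mul hπ hδ ↑u⁻¹)
  simp only [AddMonoidHom.comp_apply, AddMonoidHom.coe_mulLeft, ← hu, Units.inv_mul, hπ1] at hφf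
  exact (maximalIdeal.isMaximal R).ne_top ((Ideal.eq_top_iff_one _).mpr hφf)

end LocalRing

theorem frobDiffPower_maximalIdeal_eq_Ie_general (R : Type*) [CommRing R] [IsLocalRing R]
    (p : ℕ) [Fact p.Prime] [CharP R p]
    (hFP : ∃ φ : R →+ R, (∀ a x : R, φ (a ^ p * x) = a * φ x) ∧ φ 1 = 1)
    (e : ℕ) :
    {f : R | ∀ δ : R →+ R, (∀ a x : R, δ (a ^ p ^ e * x) = a ^ p ^ e * δ x) →
        δ f ∈ maximalIdeal R} =
      {r : R | ∀ φ : R →+ R, (∀ a x : R, φ (a ^ p ^ e * x) = a * φ x) →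
        φ r ∈ maximalIdeal R} := by
  obtain ⟨φ, hφ, hφ1⟩ := hFP
  obtain ⟨π, hπ, hπ1⟩ := exists_iterate_splitting hφ hφ1 e
  have : ExpChar R p := ExpChar.prime Fact.out
  exact Set.Subset.antisymm (fun _ hf _ => map_mem_maximalIdeal_of_forall_powLinear hf)
    (fun _ hf _ => map_mem_maximalIdeal_of_forall_invPowLinear hπ hπ1 hf)

/-- Let `(R, m, K)` be an F-finite F-pure Noetherian local ring of prime
characteristic `p` (F-finiteness: `R` is finitely generated over its subring of
`p`-th powers; F-purity: the Frobenius `R → F_* R` splits, i.e. there is an additive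
`p^{-1}`-linear map `φ` with `φ 1 = 1`).  Then for `q = p^e` the differential
Frobenius power `m^{F⟨q⟩} = {f | δ f ∈ m for all R^q-linear δ : R → R}` coincides
with `I_e = {r | φ r ∈ m for every p^{-e}-linear map φ : R → R}`, the latter set
corresponding to `{r | φ(F^e_* r) ∈ m for all φ ∈ Hom_R(F^e_* R, R)}`. -/
theorem frobDiffPower_maximalIdeal_eq_Ie (R : Type*) [CommRing R] [IsLocalRing R]
    [IsNoetherianRing R] (p : ℕ) [Fact p.Prime] [CharP R p]
    (hFF : ∃ s : Finset R, ∀ x : R, ∃ c : R → R, x = ∑ g ∈ s, c g ^ p * g)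
    (hFP : ∃ φ : R →+ R, (∀ a x : R, φ (a ^ p * x) = a * φ x) ∧ φ 1 = 1)
    (e : ℕ) :
    {f : R | ∀ δ : R →+ R, (∀ a x : R, δ (a ^ p ^ e * x) = a ^ p ^ e * δ x) →
        δ f ∈ maximalIdeal R} =
      {r : R | ∀ φ : R →+ R, (∀ a x : R, φ (a ^ p ^ e * x) = a * φ x) →
        φ r ∈ maximalIdeal R} :=
  frobDiffPower_maximalIdeal_eq_Ie_general R p hFP e
end

section
/- Let A ⊆ R ⊆ S be commutative rings, I ⊆ R and J ⊆ S ideals, and π: S → R an R-linear map with π^{-1}(I) ⊆ J. Then I⟨n⟩_A ⊆ J⟨n⟩_A ∩ R for all n ≥ 1. -/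
/-! An `R`-linear retraction `π : S → R` turns a differential operator `δ` on `S` into
`π ∘ δ ∘ ι` on `R`. Since `π` is `R`-linear, this operation commutes with taking commutators
with elements of `R`, so it preserves the order filtration; applying the definition of
`I⟨n⟩_A` to `π ∘ δ ∘ ι` then gives `π (δ f) ∈ I`, hence `δ f ∈ J`. -/

section Retraction

variable {A R S : Type*} [CommRing A] [CommRing R] [CommRing S] [Algebra A R] [Algebra R S]
  [Algebra A S] [IsScalarTower A R S]

def retractOp (π : S →ₗ[R] R) (δ : S →ₗ[A] S) : R →ₗ[A] R :=
  π.restrictScalars A ∘ₗ δ ∘ₗ (IsScalarTower.toAlgHom A R S).toLinearMap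

@[simp]
lemma retractOp_apply (π : S →ₗ[R] R) (δ : S →ₗ[A] S) (x : R) :
    retractOp π δ x = π (δ (algebraMap R S x)) :=
  rfl

lemma retractOp_commutator (π : S →ₗ[R] R) (δ : S →ₗ[A] S) (r : R) :
    retractOp π (δ ∘ₗ LinearMap.mulLeft A (algebraMap R S r)
        - LinearMap.mulLeft A (algebraMap R S r) ∘ₗ δ) =
      retractOp π δ ∘ₗ LinearMap.mulLeft A r - LinearMap.mulLeft A r ∘ₗ retractOp π δ := by
  ext x
  simp [π.map_algebraMap_mul]

lemma retractOp_mem_diffOp (π : S →ₗ[R] R) {m : ℕ} {δ : S →ₗ[A] S} (hδ : δ ∈ DiffOp A S m) :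
    retractOp π δ ∈ DiffOp A R m := by
  induction m generalizing δ with
  | zero =>
    obtain ⟨s, hs⟩ := hδ
    refine ⟨π s, fun x => ?_⟩
    rw [retractOp_apply, hs, π.map_mul_algebraMap, Algebra.algebraMap_self, RingHom.id_apply]
  | succ m ih =>
    intro r
    rw [← retractOp_commutator]
    exact ih (hδ (algebraMap R S r))

end Retraction

theorem diffPower_subset_of_retraction_general (A R S : Type*) [CommRing A] [CommRing R]
    [CommRing S] [Algebra A R] [Algebra R S] [Algebra A S] [IsScalarTower A R S]
    (I : Ideal R) (J : Ideal S) (π : S →ₗ[R] R)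
    (hπ : ∀ s : S, π s ∈ I → s ∈ J) (n : ℕ) :
    ∀ f ∈ diffPower A I n, algebraMap R S f ∈ diffPower A J n :=
  fun _ hf _ hδ => hπ _ (hf _ (retractOp_mem_diffOp π hδ))

/-- Let `A ⊆ R ⊆ S` be rings, `I ⊆ R` and `J ⊆ S` ideals, and `π : S → R` an
`R`-linear map with `π⁻¹(I) ⊆ J`.  Then `I⟨n⟩_A ⊆ J⟨n⟩_A ∩ R` for all `n ≥ 1`. -/
theorem diffPower_subset_of_retraction (A R S : Type*) [CommRing A] [CommRing R]
    [CommRing S] [Algebra A R] [Algebra R S] [Algebra A S] [IsScalarTower A R S]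
    (I : Ideal R) (J : Ideal S) (π : S →ₗ[R] R)
    (hπ : ∀ s : S, π s ∈ I → s ∈ J) (n : ℕ) (hn : 1 ≤ n) :
    ∀ f ∈ diffPower A I n, algebraMap R S f ∈ diffPower A J n :=
  diffPower_subset_of_retraction_general A R S I J π hπ n
end

section
/- Let K be a field of characteristic 0 and let M = (t_{ij}) be the generic n × n matrix over the rational function field K(t_{ij} : 1 ≤ i,j ≤ n). Then for every q ≥ 1, the entries of the q-th symmetric power matrix Sym^q(M), i.e., the matrix of the K(t_{ij})-linear endomorphism of the degree-q part of K(t_{ij})[x_1,…,x_n] induced by x_i ↦ Σ_j t_{ji} x_j, are linearly independent over K. -/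
/-!
Write `F_ν = ∏ᵢ (∑ⱼ tⱼᵢ xⱼ)^{νᵢ}`, so that the `(μ, ν)` entry is the coefficient of `x^μ` in `F_ν`.
Every monomial `t^B` occurring in that entry has row sums `μ` and column sums `ν`; that is, the
entry is weighted homogeneous of degree `(μ, ν)` for the weight `tⱼᵢ ↦ (eⱼ, eᵢ)`. Entries with
distinct indices therefore lie in independent graded pieces, and it remains to see that each entry
is nonzero: setting all `tⱼᵢ = 1` turns it into the multinomial coefficient of `x^μ` in
`(x₁ + ⋯ + xₙ)^q`, which is nonzero in characteristic zero.
-/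

open MvPolynomial Finsupp

namespace MvPolynomial

variable {R σ τ N : Type*} [CommSemiring R] [AddCommMonoid N]

def IsCoeffWeightedHomogeneous (w : τ → (σ →₀ ℕ) × N)
    (F : MvPolynomial σ (MvPolynomial τ R)) (m : N) : Prop :=
  ∀ μ, (F.coeff μ).IsWeightedHomogeneous w (μ, m)

namespace IsCoeffWeightedHomogeneous

variable {w : τ → (σ →₀ ℕ) × N}

theorem one : IsCoeffWeightedHomogeneous w (1 : MvPolynomial σ (MvPolynomial τ R)) 0 := by
  classical
  intro μ
  rw [coeff_one]
  split_ifs with h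
  · subst h
    exact isWeightedHomogeneous_one _ w
  · exact isWeightedHomogeneous_zero _ w _

theorem mul {F G : MvPolynomial σ (MvPolynomial τ R)} {a b : N}
    (hF : IsCoeffWeightedHomogeneous w F a) (hG : IsCoeffWeightedHomogeneous w G b) :
    IsCoeffWeightedHomogeneous w (F * G) (a + b) := by
  classical
  intro μ
  rw [coeff_mul]
  refine IsWeightedHomogeneous.sum _ _ _ fun x hx => ?_
  rw [Finset.HasAntidiagonal.mem_antidiagonal] at hx
  rw [← hx, ← Prod.mk_add_mk]
  exact (hF x.1).mul (hG x.2)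

theorem pow {F : MvPolynomial σ (MvPolynomial τ R)} {a : N}
    (hF : IsCoeffWeightedHomogeneous w F a) (k : ℕ) :
    IsCoeffWeightedHomogeneous w (F ^ k) (k • a) := by
  induction k with
  | zero => simpa using one
  | succ k ih => simpa [pow_succ, succ_nsmul] using ih.mul hF

theorem prod {ι : Type*} (s : Finset ι) {F : ι → MvPolynomial σ (MvPolynomial τ R)} {a : ι → N}
    (h : ∀ i ∈ s, IsCoeffWeightedHomogeneous w (F i) (a i)) :
    IsCoeffWeightedHomogeneous w (∏ i ∈ s, F i) (∑ i ∈ s, a i) := by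
  classical
  induction s using Finset.induction_on with
  | empty => simpa using one
  | insert i s hi ih =>
    rw [Finset.prod_insert hi, Finset.sum_insert hi]
    exact (h i (Finset.mem_insert_self i s)).mul
      (ih fun j hj => h j (Finset.mem_insert_of_mem hj))

theorem sum_C_X_mul_X (s : Finset σ) {t : σ → τ} {a : N}
    (ht : ∀ j ∈ s, w (t j) = (single j 1, a)) :
    IsCoeffWeightedHomogeneous w (∑ j ∈ s, C (X (t j)) * X j : MvPolynomial σ (MvPolynomial τ R))
      a := by
  classical
  intro μ
  simp only [coeff_sum, coeff_C_mul, coeff_X]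
  refine IsWeightedHomogeneous.sum _ _ _ fun j hj => ?_
  split_ifs with h
  · subst h
    rw [mul_one, ← ht j hj]
    exact isWeightedHomogeneous_X _ w _
  · rw [mul_zero]
    exact isWeightedHomogeneous_zero _ w _

end IsCoeffWeightedHomogeneous

end MvPolynomial

section GenericMatrix

variable (R : Type*) [CommSemiring R] {σ : Type*} [Fintype σ]

noncomputable def genericLinearForm (i : σ) : MvPolynomial σ (MvPolynomial (σ × σ) R) :=
  ∑ j, C (X (j, i)) * X j

/-- Its `x^μ` coefficient is the `(μ, ν)` entry of the symmetric power of the generic matrix. -/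
noncomputable def genericSymPowColumn (ν : σ →₀ ℕ) : MvPolynomial σ (MvPolynomial (σ × σ) R) :=
  ∏ i, genericLinearForm R i ^ ν i

variable {R}

noncomputable def rowColWeight (p : σ × σ) : (σ →₀ ℕ) × (σ →₀ ℕ) :=
  (single p.1 1, single p.2 1)

theorem isCoeffWeightedHomogeneous_genericSymPowColumn (ν : σ →₀ ℕ) :
    IsCoeffWeightedHomogeneous rowColWeight (genericSymPowColumn R ν) ν := by
  have hform (i : σ) :
      IsCoeffWeightedHomogeneous rowColWeight (genericLinearForm R i) (single i 1) :=
    IsCoeffWeightedHomogeneous.sum_C_X_mul_X _ fun _ _ => rfl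
  simpa [genericSymPowColumn, smul_single_one, univ_sum_single] using
    IsCoeffWeightedHomogeneous.prod Finset.univ fun i _ => (hform i).pow (ν i)

theorem map_eval_one_genericSymPowColumn (ν : σ →₀ ℕ) :
    map (eval fun _ => 1) (genericSymPowColumn R ν) =
      (∑ j, X j) ^ ν.sum fun _ k => k := by
  simp [genericSymPowColumn, genericLinearForm, Finset.prod_pow_eq_pow_sum,
    Finsupp.sum_fintype]

theorem coeff_genericSymPowColumn_ne_zero [CharZero R] {μ ν : σ →₀ ℕ}
    (h : (μ.sum fun _ k => k) = ν.sum fun _ k => k) :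
    coeff μ (genericSymPowColumn R ν) ≠ 0 := by
  intro h0
  have hcoeff := congrArg (coeff μ) (map_eval_one_genericSymPowColumn (R := R) ν)
  rw [coeff_map, h0, map_zero, coeff_sum_X_pow_of_fintype, if_pos h] at hcoeff
  exact Nat.cast_ne_zero.mpr (Nat.multinomial_pos _ _).ne' hcoeff.symm

theorem linearIndependent_coeff_genericSymPowColumn (K : Type*) [Field K] [CharZero K]
    {ι : Type*} {P : ι → (σ →₀ ℕ) × (σ →₀ ℕ)} (hP : Function.Injective P)
    (hsum : ∀ k, ((P k).1.sum fun _ m => m) = (P k).2.sum fun _ m => m) :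
    LinearIndependent K fun k => coeff (P k).1 (genericSymPowColumn K (P k).2) := by
  classical
  refine iSupIndep.linearIndependent (fun k => weightedHomogeneousSubmodule K rowColWeight (P k))
    ?_ (fun k => isCoeffWeightedHomogeneous_genericSymPowColumn (P k).2 (P k).1)
    (fun k => coeff_genericSymPowColumn_ne_zero (hsum k))
  exact ((weightedDecomposition K rowColWeight).isInternal).submodule_iSupIndep.comp hP

end GenericMatrix

theorem symPow_genericMatrix_entries_linearIndependent_general
    (K : Type*) [Field K] [CharZero K] (n q : ℕ) :
    LinearIndependent K
      (fun P : {P : (Fin n →₀ ℕ) × (Fin n →₀ ℕ) //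
          (P.1.sum fun _ k => k) = q ∧ (P.2.sum fun _ k => k) = q} =>
        MvPolynomial.coeff P.1.1
          (∏ i : Fin n,
            (∑ j : Fin n,
              MvPolynomial.C ((algebraMap (MvPolynomial (Fin n × Fin n) K)
                  (FractionRing (MvPolynomial (Fin n × Fin n) K)))
                  (MvPolynomial.X (j, i))) *
                MvPolynomial.X (R := FractionRing (MvPolynomial (Fin n × Fin n) K)) j)
              ^ (P.1.2 i))) := by
  set R := MvPolynomial (Fin n × Fin n) K
  set L := FractionRing R
  have hpoly := linearIndependent_coeff_genericSymPowColumn K Subtype.val_injective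
    fun P : {P : (Fin n →₀ ℕ) × (Fin n →₀ ℕ) //
      (P.1.sum fun _ k => k) = q ∧ (P.2.sum fun _ k => k) = q} => P.2.1.trans P.2.2.symm
  have hfrac := hpoly.map' (IsScalarTower.toAlgHom K R L).toLinearMap
    (LinearMap.ker_eq_bot.mpr (IsFractionRing.injective R L))
  rw [AlgHom.coe_toLinearMap, IsScalarTower.coe_toAlgHom'] at hfrac
  simpa only [Function.comp_def, ← coeff_map, genericSymPowColumn, genericLinearForm, map_prod,
    map_pow, map_sum, map_mul, map_C, map_X] using hfrac

/-- Let `K` be a field of characteristic zero and `L = K(t_{ij})` the rational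
function field in the entries of a generic `n × n` matrix `M = (t_{ij})`.  The
entries of the `q`-th symmetric power `Sym^q(M)` — the matrix of the `L`-linear
endomorphism of the degree-`q` part of `L[x_1,…,x_n]` induced by
`x_i ↦ ∑_j t_{ji} x_j`, whose `(μ, ν)` entry is the coefficient of `x^μ` in
`∏_i (t_{1i}x_1 + ⋯ + t_{ni}x_n)^{ν_i}` — are linearly independent over `K`. -/
theorem symPow_genericMatrix_entries_linearIndependent
    (K : Type*) [Field K] [CharZero K] (n q : ℕ) (hq : 1 ≤ q) :
    LinearIndependent K
      (fun P : {P : (Fin n →₀ ℕ) × (Fin n →₀ ℕ) //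
          (P.1.sum fun _ k => k) = q ∧ (P.2.sum fun _ k => k) = q} =>
        MvPolynomial.coeff P.1.1
          (∏ i : Fin n,
            (∑ j : Fin n,
              MvPolynomial.C ((algebraMap (MvPolynomial (Fin n × Fin n) K)
                  (FractionRing (MvPolynomial (Fin n × Fin n) K)))
                  (MvPolynomial.X (j, i))) *
                MvPolynomial.X (R := FractionRing (MvPolynomial (Fin n × Fin n) K)) j)
              ^ (P.1.2 i))) :=
  symPow_genericMatrix_entries_linearIndependent_general K n q
end
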